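/- arXiv:2404.06368 — 2 statements merged into one kernel-verified Lean document; each statement's English description precedes it below -/
import Mathlib

section
/- Let 𝕜 be a field, let 𝒜 be a simplicial 𝕜-algebra, and let ℬ, 𝒞 be simplicial left modules over 𝒜. The relation 'f ∼ g if and only if there exists a presimplicial homotopy between f and g' is an equivalence relation on the set of presimplicial morphisms ℬ → 𝒞. -/
open scoped TensorProduct
open MulOpposite PiTensorProduct

/-- A simplicial `k`-algebra: a collection of `k`-algebras `A n` with face maps
`δ n i : A (n+1) →ₐ[k] A n` (for `0 ≤ i ≤ n+1`) and degeneracy maps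
`σ n i : A n →ₐ[k] A (n+1)` (for `0 ≤ i ≤ n`) satisfying the simplicial identities. -/
structure SimplicialAlgebra (k : Type) [Field k] (A : ℕ → Type)
    [∀ n, Ring (A n)] [∀ n, Algebra k (A n)] where
  δ : (n : ℕ) → ℕ → (A (n + 1) →ₐ[k] A n)
  σ : (n : ℕ) → ℕ → (A n →ₐ[k] A (n + 1))
  δδ : ∀ n i j, i < j → j ≤ n + 2 → ∀ a, δ n i (δ (n + 1) j a) = δ n (j - 1) (δ (n + 1) i a)
  σσ : ∀ n i j, i ≤ j → j ≤ n → ∀ a, σ (n + 1) i (σ n j a) = σ (n + 1) (j + 1) (σ n i a)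
  δσ_lt : ∀ n i j, i < j → j ≤ n + 1 → ∀ a, δ (n + 1) i (σ (n + 1) j a) = σ n (j - 1) (δ n i a)
  δσ_eq : ∀ n i j, (i = j ∨ i = j + 1) → j ≤ n → ∀ a, δ n i (σ n j a) = a
  δσ_gt : ∀ n i j, j + 1 < i → i ≤ n + 2 → ∀ a, δ (n + 1) i (σ (n + 1) j a) = σ n j (δ n (i - 1) a)

/-- A simplicial left module over a simplicial `k`-algebra `𝓐`.  The left
`A n`-module structure on `B n` (extending the `k`-vector space structure) is
encoded by the `k`-bilinear action map `act n` which is unital and multiplicative. -/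
structure SimplicialLeftModule (k : Type) [Field k] {A : ℕ → Type}
    [∀ n, Ring (A n)] [∀ n, Algebra k (A n)] (𝓐 : SimplicialAlgebra k A)
    (B : ℕ → Type) [∀ n, AddCommGroup (B n)] [∀ n, Module k (B n)] where
  act : ∀ n, A n →ₗ[k] B n →ₗ[k] B n
  act_one : ∀ n (b : B n), act n 1 b = b
  act_mul : ∀ n (r s : A n) (b : B n), act n (r * s) b = act n r (act n s b)
  δ : (n : ℕ) → ℕ → (B (n + 1) →ₗ[k] B n)
  σ : (n : ℕ) → ℕ → (B n →ₗ[k] B (n + 1))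
  δδ : ∀ n i j, i < j → j ≤ n + 2 → ∀ b, δ n i (δ (n + 1) j b) = δ n (j - 1) (δ (n + 1) i b)
  σσ : ∀ n i j, i ≤ j → j ≤ n → ∀ b, σ (n + 1) i (σ n j b) = σ (n + 1) (j + 1) (σ n i b)
  δσ_lt : ∀ n i j, i < j → j ≤ n + 1 → ∀ b, δ (n + 1) i (σ (n + 1) j b) = σ n (j - 1) (δ n i b)
  δσ_eq : ∀ n i j, (i = j ∨ i = j + 1) → j ≤ n → ∀ b, δ n i (σ n j b) = b
  δσ_gt : ∀ n i j, j + 1 < i → i ≤ n + 2 → ∀ b, δ (n + 1) i (σ (n + 1) j b) = σ n j (δ n (i - 1) b)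
  δ_act : ∀ n i, i ≤ n + 1 → ∀ (r : A (n + 1)) (b : B (n + 1)),
    δ n i (act (n + 1) r b) = act n (𝓐.δ n i r) (δ n i b)
  σ_act : ∀ n i, i ≤ n → ∀ (r : A n) (b : B n),
    σ n i (act n r b) = act (n + 1) (𝓐.σ n i r) (σ n i b)

variable {k : Type} [Field k] {A : ℕ → Type} [∀ n, Ring (A n)] [∀ n, Algebra k (A n)]
  {𝓐 : SimplicialAlgebra k A}
  {B C : ℕ → Type}
  [∀ n, AddCommGroup (B n)] [∀ n, Module k (B n)]
  [∀ n, AddCommGroup (C n)] [∀ n, Module k (C n)]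

/-- A presimplicial morphism between simplicial left modules: a family of
`A n`-module morphisms commuting with the face maps. -/
structure PresimplicialMorphism (ℬ : SimplicialLeftModule k 𝓐 B)
    (𝒞 : SimplicialLeftModule k 𝓐 C) where
  f : ∀ n, B n →ₗ[k] C n
  f_act : ∀ n (r : A n) (b : B n), f n (ℬ.act n r b) = 𝒞.act n r (f n b)
  comm : ∀ n i, i ≤ n + 1 → ∀ b, f n (ℬ.δ n i b) = 𝒞.δ n i (f (n + 1) b)

/-- `h` is a presimplicial homotopy between the presimplicial morphisms `φ` and `ψ`. -/
def IsPresimplicialHomotopy {ℬ : SimplicialLeftModule k 𝓐 B} {𝒞 : SimplicialLeftModule k 𝓐 C}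
    (φ ψ : PresimplicialMorphism ℬ 𝒞)
    (h : (n : ℕ) → ℕ → (B n →ₗ[k] C (n + 1))) : Prop :=
  (∀ n i, i ≤ n → ∀ (r : A n) (b : B n),
      h n i (ℬ.act n r b) = 𝒞.act (n + 1) (𝓐.σ n i r) (h n i b)) ∧
  (∀ n i j, i < j → j ≤ n + 1 → ∀ b, 𝒞.δ (n + 1) i (h (n + 1) j b) = h n (j - 1) (ℬ.δ n i b)) ∧
  (∀ n i, 0 < i → i ≤ n → ∀ b, 𝒞.δ n i (h n i b) = 𝒞.δ n i (h n (i - 1) b)) ∧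
  (∀ n i j, j + 1 < i → i ≤ n + 2 → ∀ b, 𝒞.δ (n + 1) i (h (n + 1) j b) = h n j (ℬ.δ n (i - 1) b)) ∧
  (∀ n b, 𝒞.δ n 0 (h n 0 b) = φ.f n b) ∧
  (∀ n b, 𝒞.δ n (n + 1) (h n n b) = ψ.f n b)


private lemma refl_homotopy {ℬ : SimplicialLeftModule k 𝓐 B} {𝒞 : SimplicialLeftModule k 𝓐 C}
    (φ : PresimplicialMorphism ℬ 𝒞) :
    IsPresimplicialHomotopy φ φ (fun n i => (𝒞.σ n i) ∘ₗ (φ.f n)) := by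
  refine ⟨?_, ?_, ?_, ?_, ?_, ?_⟩
  · intro n i hi r b
    simp only [LinearMap.comp_apply]
    rw [φ.f_act, 𝒞.σ_act n i hi]
  · intro n i j hij hj b
    simp only [LinearMap.comp_apply]
    rw [𝒞.δσ_lt n i j hij hj, φ.comm n i (by omega)]
  · intro n i hi0 hin b
    simp only [LinearMap.comp_apply]
    rw [𝒞.δσ_eq n i i (Or.inl rfl) hin, 𝒞.δσ_eq n i (i - 1) (Or.inr (by omega)) (by omega)]
  · intro n i j hji hi b
    simp only [LinearMap.comp_apply]
    rw [𝒞.δσ_gt n i j hji hi, φ.comm n (i - 1) (by omega)]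
  · intro n b
    simp only [LinearMap.comp_apply]
    rw [𝒞.δσ_eq n 0 0 (Or.inl rfl) (Nat.zero_le n)]
  · intro n b
    simp only [LinearMap.comp_apply]
    rw [𝒞.δσ_eq n (n + 1) n (Or.inr rfl) (le_refl n)]

private lemma combo_homotopy {ℬ : SimplicialLeftModule k 𝓐 B} {𝒞 : SimplicialLeftModule k 𝓐 C}
    {φ1 ψ1 φ2 ψ2 φ3 ψ3 φ ψ : PresimplicialMorphism ℬ 𝒞}
    {h1 h2 h3 : (n : ℕ) → ℕ → (B n →ₗ[k] C (n + 1))}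
    (H1 : IsPresimplicialHomotopy φ1 ψ1 h1)
    (H2 : IsPresimplicialHomotopy φ2 ψ2 h2)
    (H3 : IsPresimplicialHomotopy φ3 ψ3 h3)
    (hφ : ∀ n b, φ1.f n b + φ2.f n b - φ3.f n b = φ.f n b)
    (hψ : ∀ n b, ψ1.f n b + ψ2.f n b - ψ3.f n b = ψ.f n b) :
    IsPresimplicialHomotopy φ ψ (fun n i => h1 n i + h2 n i - h3 n i) := by
  obtain ⟨a1, b1, c1, d1, e1, f1⟩ := H1
  obtain ⟨a2, b2, c2, d2, e2, f2⟩ := H2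
  obtain ⟨a3, b3, c3, d3, e3, f3⟩ := H3
  refine ⟨?_, ?_, ?_, ?_, ?_, ?_⟩
  · intro n i hi r b
    simp only [LinearMap.sub_apply, LinearMap.add_apply, map_add, map_sub]
    rw [a1 n i hi, a2 n i hi, a3 n i hi]
  · intro n i j hij hj b
    simp only [LinearMap.sub_apply, LinearMap.add_apply, map_add, map_sub]
    rw [b1 n i j hij hj, b2 n i j hij hj, b3 n i j hij hj]
  · intro n i hi0 hin b
    simp only [LinearMap.sub_apply, LinearMap.add_apply, map_add, map_sub]
    rw [c1 n i hi0 hin, c2 n i hi0 hin, c3 n i hi0 hin]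
  · intro n i j hji hi b
    simp only [LinearMap.sub_apply, LinearMap.add_apply, map_add, map_sub]
    rw [d1 n i j hji hi, d2 n i j hji hi, d3 n i j hji hi]
  · intro n b
    simp only [LinearMap.sub_apply, LinearMap.add_apply, map_add, map_sub]
    rw [e1 n b, e2 n b, e3 n b, hφ n b]
  · intro n b
    simp only [LinearMap.sub_apply, LinearMap.add_apply, map_add, map_sub]
    rw [f1 n b, f2 n b, f3 n b, hψ n b]

/-- The relation `φ ∼ ψ` iff there exists a presimplicial homotopy between `φ` and `ψ`
is an equivalence relation on the presimplicial morphisms `ℬ → 𝒞`. -/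
theorem presimplicialHomotopy_equivalence {ℬ : SimplicialLeftModule k 𝓐 B}
    {𝒞 : SimplicialLeftModule k 𝓐 C} :
    Equivalence (fun φ ψ : PresimplicialMorphism ℬ 𝒞 =>
      ∃ h, IsPresimplicialHomotopy φ ψ h) := by
  constructor
  · intro φ
    exact ⟨_, refl_homotopy φ⟩
  · rintro φ ψ ⟨h, H⟩
    exact ⟨_, combo_homotopy (refl_homotopy φ) (refl_homotopy ψ) H
      (fun n b => by abel) (fun n b => by abel)⟩
  · rintro φ ψ χ ⟨h1, H1⟩ ⟨h2, H2⟩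
    exact ⟨_, combo_homotopy H1 H2 (refl_homotopy ψ)
      (fun n b => by abel) (fun n b => by abel)⟩
end

section
/- Let 𝕜 be a field, let 𝒜 be a simplicial 𝕜-algebra, let ℳ be a simplicial right module over 𝒜, and let ℬ, 𝒞 be simplicial left modules over 𝒜. Suppose f : ℬ → 𝒞 and g : 𝒞 → ℬ are presimplicial morphisms and h = (h_i) is a presimplicial homotopy between g∘f and id_ℬ (so δ_0^ℬ h_0 = g_n f_n and δ_{n+1}^ℬ h_n = id on ℬ_n). Then the maps h_i′ : ℳ_n ⊗_{𝒜_n} ℬ_n → ℳ_{n+1} ⊗_{𝒜_{n+1}} ℬ_{n+1} given by h_i′(m ⊗_{𝒜_n} b) = σ_i^ℳ(m) ⊗_{𝒜_{n+1}} h_i(b) are well-defined and form a presimplicial homotopy of 𝕜-modules between G∘F and the identity of ℳ ⊗_𝒜 ℬ, where F_n(m ⊗ b) = m ⊗ f_n(b) and G_n(m ⊗ c) = m ⊗ g_n(c); explicitly, with D_i(m ⊗ b) = δ_i^ℳ(m) ⊗ δ_i^ℬ(b): D_i h_j′ = h_{j−1}′ D_i for i<j; D_i h_i′ = D_i h_{i−1}′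 for 0<i≤n; D_i h_j′ = h_j′ D_{i−1} for i>j+1; D_0 h_0′ = G_nF_n; D_{n+1} h_n′ = id. -/
open scoped TensorProduct
open MulOpposite PiTensorProduct

/-- A simplicial right module over a simplicial `k`-algebra `𝓐`; the right
`A n`-module structure on `M n` is encoded by the `k`-bilinear action map
`act n`, with `act n r` being right multiplication by `r`. -/
structure SimplicialRightModule (k : Type) [Field k] {A : ℕ → Type}
    [∀ n, Ring (A n)] [∀ n, Algebra k (A n)] (𝓐 : SimplicialAlgebra k A)
    (M : ℕ → Type) [∀ n, AddCommGroup (M n)] [∀ n, Module k (M n)] where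
  act : ∀ n, A n →ₗ[k] M n →ₗ[k] M n
  act_one : ∀ n (m : M n), act n 1 m = m
  act_mul : ∀ n (r s : A n) (m : M n), act n (r * s) m = act n s (act n r m)
  δ : (n : ℕ) → ℕ → (M (n + 1) →ₗ[k] M n)
  σ : (n : ℕ) → ℕ → (M n →ₗ[k] M (n + 1))
  δδ : ∀ n i j, i < j → j ≤ n + 2 → ∀ m, δ n i (δ (n + 1) j m) = δ n (j - 1) (δ (n + 1) i m)
  σσ : ∀ n i j, i ≤ j → j ≤ n → ∀ m, σ (n + 1) i (σ n j m) = σ (n + 1) (j + 1) (σ n i m)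
  δσ_lt : ∀ n i j, i < j → j ≤ n + 1 → ∀ m, δ (n + 1) i (σ (n + 1) j m) = σ n (j - 1) (δ n i m)
  δσ_eq : ∀ n i j, (i = j ∨ i = j + 1) → j ≤ n → ∀ m, δ n i (σ n j m) = m
  δσ_gt : ∀ n i j, j + 1 < i → i ≤ n + 2 → ∀ m, δ (n + 1) i (σ (n + 1) j m) = σ n j (δ n (i - 1) m)
  δ_act : ∀ n i, i ≤ n + 1 → ∀ (r : A (n + 1)) (m : M (n + 1)),
    δ n i (act (n + 1) r m) = act n (𝓐.δ n i r) (δ n i m)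
  σ_act : ∀ n i, i ≤ n → ∀ (r : A n) (m : M n),
    σ n i (act n r m) = act (n + 1) (𝓐.σ n i r) (σ n i m)

variable {k : Type} [Field k] {A : ℕ → Type} [∀ n, Ring (A n)] [∀ n, Algebra k (A n)]
  {𝓐 : SimplicialAlgebra k A}
  {M' B C D : ℕ → Type}
  [∀ n, AddCommGroup (M' n)] [∀ n, Module k (M' n)]
  [∀ n, AddCommGroup (B n)] [∀ n, Module k (B n)]
  [∀ n, AddCommGroup (C n)] [∀ n, Module k (C n)]
  [∀ n, AddCommGroup (D n)] [∀ n, Module k (D n)]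

/-- Composition of presimplicial morphisms. -/
def PresimplicialMorphism.comp {ℬ : SimplicialLeftModule k 𝓐 B}
    {𝒞 : SimplicialLeftModule k 𝓐 C} {𝒟 : SimplicialLeftModule k 𝓐 D}
    (ψ : PresimplicialMorphism 𝒞 𝒟) (φ : PresimplicialMorphism ℬ 𝒞) :
    PresimplicialMorphism ℬ 𝒟 where
  f := fun n => (ψ.f n).comp (φ.f n)
  f_act := fun n r b => by
    simp only [LinearMap.comp_apply, φ.f_act, ψ.f_act]
  comm := fun n i hi b => by
    simp only [LinearMap.comp_apply, φ.comm n i hi, ψ.comm n i hi]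

/-- The identity presimplicial morphism. -/
def PresimplicialMorphism.id (ℬ : SimplicialLeftModule k 𝓐 B) :
    PresimplicialMorphism ℬ ℬ where
  f := fun _ => LinearMap.id
  f_act := fun _ _ _ => rfl
  comm := fun _ _ _ _ => rfl

/-- A presimplicial morphism `φ : ℬ → 𝒞` is a presimplicial homotopy equivalence if there
is a presimplicial morphism `ψ : 𝒞 → ℬ` with `ψ ∘ φ` presimplicially homotopic to `id ℬ`
and `φ ∘ ψ` presimplicially homotopic to `id 𝒞`. -/
def IsPresimplicialHomotopyEquivalence {ℬ : SimplicialLeftModule k 𝓐 B}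
    {𝒞 : SimplicialLeftModule k 𝓐 C} (φ : PresimplicialMorphism ℬ 𝒞) : Prop :=
  ∃ ψ : PresimplicialMorphism 𝒞 ℬ,
    (∃ h, IsPresimplicialHomotopy (ψ.comp φ) (PresimplicialMorphism.id ℬ) h) ∧
    (∃ t, IsPresimplicialHomotopy (φ.comp ψ) (PresimplicialMorphism.id 𝒞) t)

/-- The submodule of `M' n ⊗[k] B n` by which one quotients to obtain the balanced
tensor product `M' n ⊗[A n] B n` of the right module `ℳ` and the left module `ℬ`. -/
def balRel (ℳ : SimplicialRightModule k 𝓐 M') (ℬ : SimplicialLeftModule k 𝓐 B) (n : ℕ) :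
    Submodule k (M' n ⊗[k] B n) :=
  Submodule.span k {z | ∃ (r : A n) (m : M' n) (b : B n),
    z = (ℳ.act n r m) ⊗ₜ[k] b - m ⊗ₜ[k] (ℬ.act n r b)}

/-- The balanced tensor product `M' n ⊗[A n] B n`. -/
abbrev BTen (ℳ : SimplicialRightModule k 𝓐 M') (ℬ : SimplicialLeftModule k 𝓐 B) (n : ℕ) :=
  (M' n ⊗[k] B n) ⧸ balRel ℳ ℬ n

/-- Suppose `φ : ℬ → 𝒞` and `ψ : 𝒞 → ℬ` are presimplicial morphisms and `h` is a
presimplicial homotopy between `ψ ∘ φ` and `id ℬ`.  Then the maps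
`h' n i : ℳ n ⊗[A n] ℬ n → ℳ (n+1) ⊗[A (n+1)] ℬ (n+1)`,
`h' n i (m ⊗ b) = σᴹ n i m ⊗ h n i b`, are well defined and form a presimplicial
homotopy of `k`-modules between `G ∘ F` and the identity of `ℳ ⊗ ℬ`, where
`F n (m ⊗ b) = m ⊗ φ n b` and `G n (m ⊗ c) = m ⊗ ψ n c` and `D` denotes the induced
face maps on the balanced tensor products. -/
theorem tensor_homotopy (ℳ : SimplicialRightModule k 𝓐 M')
    {ℬ : SimplicialLeftModule k 𝓐 B} {𝒞 : SimplicialLeftModule k 𝓐 C}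
    (φ : PresimplicialMorphism ℬ 𝒞) (ψ : PresimplicialMorphism 𝒞 ℬ)
    (h : (n : ℕ) → ℕ → (B n →ₗ[k] B (n + 1)))
    (hh : IsPresimplicialHomotopy (ψ.comp φ) (PresimplicialMorphism.id ℬ) h)
    (DB : (n : ℕ) → ℕ → (BTen ℳ ℬ (n + 1) →ₗ[k] BTen ℳ ℬ n))
    (hDB : ∀ n i, i ≤ n + 1 → ∀ (m : M' (n + 1)) (b : B (n + 1)),
      DB n i (Submodule.Quotient.mk (m ⊗ₜ[k] b)) =
        Submodule.Quotient.mk (ℳ.δ n i m ⊗ₜ[k] ℬ.δ n i b))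
    (F : (n : ℕ) → (BTen ℳ ℬ n →ₗ[k] BTen ℳ 𝒞 n))
    (hF : ∀ n (m : M' n) (b : B n),
      F n (Submodule.Quotient.mk (m ⊗ₜ[k] b)) = Submodule.Quotient.mk (m ⊗ₜ[k] φ.f n b))
    (G : (n : ℕ) → (BTen ℳ 𝒞 n →ₗ[k] BTen ℳ ℬ n))
    (hG : ∀ n (m : M' n) (c : C n),
      G n (Submodule.Quotient.mk (m ⊗ₜ[k] c)) = Submodule.Quotient.mk (m ⊗ₜ[k] ψ.f n c)) :
    ∃ h' : (n : ℕ) → ℕ → (BTen ℳ ℬ n →ₗ[k] BTen ℳ ℬ (n + 1)),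
      (∀ n i, i ≤ n → ∀ (m : M' n) (b : B n),
        h' n i (Submodule.Quotient.mk (m ⊗ₜ[k] b)) =
          Submodule.Quotient.mk (ℳ.σ n i m ⊗ₜ[k] h n i b)) ∧
      (∀ n i j, i < j → j ≤ n + 1 → ∀ z,
        DB (n + 1) i (h' (n + 1) j z) = h' n (j - 1) (DB n i z)) ∧
      (∀ n i, 0 < i → i ≤ n → ∀ z, DB n i (h' n i z) = DB n i (h' n (i - 1) z)) ∧
      (∀ n i j, j + 1 < i → i ≤ n + 2 → ∀ z,
        DB (n + 1) i (h' (n + 1) j z) = h' n j (DB n (i - 1) z)) ∧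
      (∀ n z, DB n 0 (h' n 0 z) = G n (F n z)) ∧
      (∀ n z, DB n (n + 1) (h' n n z) = z) := by
  obtain ⟨h_act, h_lt, h_eqF, h_gt, h_zero, h_last⟩ := hh
  have key : ∀ n i, i ≤ n → balRel ℳ ℬ n ≤ LinearMap.ker
      ((balRel ℳ ℬ (n+1)).mkQ.comp (TensorProduct.map (ℳ.σ n i) (h n i))) := by
    intro n i hi
    rw [balRel, Submodule.span_le]
    rintro z ⟨r, m, b, rfl⟩
    simp only [SetLike.mem_coe, LinearMap.mem_ker, LinearMap.comp_apply, map_sub,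
      TensorProduct.map_tmul, Submodule.mkQ_apply]
    rw [ℳ.σ_act n i hi, h_act n i hi, ← Submodule.Quotient.mk_sub, Submodule.Quotient.mk_eq_zero]
    exact Submodule.subset_span ⟨𝓐.σ n i r, ℳ.σ n i m, h n i b, rfl⟩
  set h' : (n : ℕ) → ℕ → (BTen ℳ ℬ n →ₗ[k] BTen ℳ ℬ (n + 1)) := fun n i =>
    if hi : i ≤ n then (balRel ℳ ℬ n).liftQ _ (key n i hi) else 0 with h'def
  have h'app : ∀ n i, i ≤ n → ∀ (m : M' n) (b : B n),
      h' n i (Submodule.Quotient.mk (m ⊗ₜ[k] b)) =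
        Submodule.Quotient.mk (ℳ.σ n i m ⊗ₜ[k] h n i b) := by
    intro n i hi m b
    rw [h'def]
    simp only [dif_pos hi]
    rw [Submodule.liftQ_apply, LinearMap.comp_apply, TensorProduct.map_tmul,
      Submodule.mkQ_apply]
  refine ⟨h', h'app, ?_, ?_, ?_, ?_, ?_⟩
  · intro n i j hij hj z
    obtain ⟨x, rfl⟩ := Submodule.Quotient.mk_surjective _ z
    induction x using TensorProduct.induction_on with
    | zero => simp
    | tmul m b =>
      rw [h'app (n+1) j (by omega) m b, hDB (n+1) i (by omega),
        hDB n i (by omega), h'app n (j-1) (by omega),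
        ℳ.δσ_lt n i j hij hj, h_lt n i j hij hj]
    | add x y hx hy =>
      simp only [Submodule.Quotient.mk_add, map_add, hx, hy]
  · intro n i hi0 hin z
    obtain ⟨x, rfl⟩ := Submodule.Quotient.mk_surjective _ z
    induction x using TensorProduct.induction_on with
    | zero => simp
    | tmul m b =>
      rw [h'app n i hin m b, h'app n (i-1) (by omega) m b,
        hDB n i (by omega), hDB n i (by omega),
        ℳ.δσ_eq n i i (Or.inl rfl) hin,
        ℳ.δσ_eq n i (i-1) (Or.inr (by omega)) (by omega),
        h_eqF n i hi0 hin]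
    | add x y hx hy =>
      simp only [Submodule.Quotient.mk_add, map_add, hx, hy]
  · intro n i j hij hi z
    obtain ⟨x, rfl⟩ := Submodule.Quotient.mk_surjective _ z
    induction x using TensorProduct.induction_on with
    | zero => simp
    | tmul m b =>
      rw [h'app (n+1) j (by omega) m b, hDB (n+1) i (by omega),
        hDB n (i-1) (by omega), h'app n j (by omega),
        ℳ.δσ_gt n i j hij hi, h_gt n i j hij hi]
    | add x y hx hy =>
      simp only [Submodule.Quotient.mk_add, map_add, hx, hy]
  · intro n z
    obtain ⟨x, rfl⟩ := Submodule.Quotient.mk_surjective _ z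
    induction x using TensorProduct.induction_on with
    | zero => simp
    | tmul m b =>
      rw [h'app n 0 (by omega) m b, hDB n 0 (by omega), hF n m b, hG n m (φ.f n b),
        ℳ.δσ_eq n 0 0 (Or.inl rfl) (by omega), h_zero n b]
      rfl
    | add x y hx hy =>
      simp only [Submodule.Quotient.mk_add, map_add, hx, hy]
  · intro n z
    obtain ⟨x, rfl⟩ := Submodule.Quotient.mk_surjective _ z
    induction x using TensorProduct.induction_on with
    | zero => simp
    | tmul m b =>
      rw [h'app n n (le_refl n) m b, hDB n (n+1) (by omega),
        ℳ.δσ_eq n (n+1) n (Or.inr rfl) (le_refl n), h_last n b]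
      rfl
    | add x y hx hy =>
      simp only [Submodule.Quotient.mk_add, map_add, hx, hy]
end
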